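/- arXiv:2111.12975 — 2 statements merged into one kernel-verified Lean document; each statement's English description precedes it below -/
import Mathlib

section
/- The image of the map ψ is contained in yHx; that is, for every w ∈ yH, ψ(w) ∈ yHx (so every word appearing in ψ(w) begins with y and ends with x). -/
open scoped BigOperators

/-- `H¹`: the ℚ-vector space with basis the words `z_{k₁}⋯z_{k_r}` in the letters
`z_k` (`k` a positive integer), encoded as finitely supported functions on lists. -/
abbrev H1 : Type := List ℕ+ →₀ ℚ

/-- The basis word `z_{k₁}⋯z_{k_r}` of `H¹` (the empty list is the unit `1`). -/
noncomputable def W (l : List ℕ+) : H1 := Finsupp.single l 1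

/-- Left multiplication by the letter `z_k` (linear extension of `w ↦ z_k w`). -/
noncomputable def consL (k : ℕ+) (h : H1) : H1 := Finsupp.mapDomain (fun w => k :: w) h

/-- Right multiplication by the letter `z_k` (linear extension of `w ↦ w z_k`). -/
noncomputable def mulRk (k : ℕ+) (h : H1) : H1 := Finsupp.mapDomain (fun w => w ++ [k]) h

/-- The harmonic (stuffle) product on words:
`1 ∗ u = u ∗ 1 = u`, `z_k u ∗ z_l v = z_k(u ∗ z_l v) + z_l(z_k u ∗ v) + z_{k+l}(u ∗ v)`. -/
noncomputable def harmW : List ℕ+ → List ℕ+ → H1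
  | [], v => W v
  | u, [] => W u
  | k :: u, l :: v =>
      consL k (harmW u (l :: v)) + consL l (harmW (k :: u) v) + consL (k + l) (harmW u v)
  termination_by u v => u.length + v.length

/-- The harmonic product `∗` on `H¹`, as the ℚ-bilinear extension of `harmW`. -/
noncomputable def harm (g h : H1) : H1 :=
  g.sum fun u c => h.sum fun v d => (c * d) • harmW u v

/-- The product `ш̃` on words in the letters `z_k`:
`1 ш̃ u = u ш̃ 1 = u`, `z_k u ш̃ z_l v = z_k(u ш̃ z_l v) + z_l(z_k u ш̃ v)`. -/
noncomputable def shtW : List ℕ+ → List ℕ+ → H1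
  | [], v => W v
  | u, [] => W u
  | k :: u, l :: v => consL k (shtW u (l :: v)) + consL l (shtW (k :: u) v)
  termination_by u v => u.length + v.length

/-- The shuffle product `ш̃` on `H¹` (on the alphabet `z₁, z₂, …`), bilinear extension. -/
noncomputable def sht (g h : H1) : H1 :=
  g.sum fun u c => h.sum fun v d => (c * d) • shtW u v

/-- Addition of a natural number to a positive natural number. -/
def pplus (k : ℕ+) (e : ℕ) : ℕ+ := ⟨(k : ℕ) + e, by have := k.pos; omega⟩

/-- `σ_m` on words: `σ_m(z_{k₁}⋯z_{k_r}) = Σ_{e₁+⋯+e_r=m} ∏_j C(k_j+e_j-1, e_j) z_{k₁+e₁}⋯z_{k_r+e_r}`,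
which is the word formula for `σ_m(1) = δ_{m,0}`, `σ_m(yw) = y(w ш x^m)`. -/
noncomputable def sigW : ℕ → List ℕ+ → H1
  | m, [] => if m = 0 then W [] else 0
  | m, k :: ks => ∑ e ∈ Finset.range (m + 1),
      ((((k : ℕ) + e - 1).choose e : ℚ)) • consL (pplus k e) (sigW (m - e) ks)
  termination_by m ks => ks.length

/-- `σ_m : H¹ → H¹`, linear extension. -/
noncomputable def sig (m : ℕ) (h : H1) : H1 := h.sum fun ks c => c • sigW m ks

/-- `S` on words: the word formula for `S(1) = 1`, `S(yw) = y S₁(w)` where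
`S₁(x) = x`, `S₁(y) = x + y`; explicitly `S(z_{k₁}⋯z_{k_r})` is the sum over all ways of
replacing separating commas by `+`. -/
noncomputable def StW : List ℕ+ → H1
  | [] => W []
  | [k] => W [k]
  | k :: l :: ks => consL k (StW (l :: ks)) + StW ((k + l) :: ks)
  termination_by ks => ks.length

/-- `S : H¹ → H¹`, linear extension. -/
noncomputable def St (h : H1) : H1 := h.sum fun ks c => c • StW ks

/-- `S̃ = S ∘ d` on words, where `d(x) = x`, `d(y) = -y`, so `d` multiplies a word of
depth `r` by `(-1)^r`. -/
noncomputable def SttW (ks : List ℕ+) : H1 := ((-1 : ℚ)) ^ ks.length • StW ks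

/-- `S̃ = S ∘ d : H¹ → H¹`, linear extension. -/
noncomputable def Stt (h : H1) : H1 := h.sum fun ks c => c • SttW ks

/-- `ψ` on words: `ψ(z_{k₁}⋯z_{k_r}) = Σ_{i=0}^{r-1} z_{k₁}⋯z_{k_i} ∗ S̃(σ₁(z_{k_r}⋯z_{k_{i+1}}))`. -/
noncomputable def psiW (ks : List ℕ+) : H1 :=
  ∑ i ∈ Finset.range ks.length, harm (W (ks.take i)) (Stt (sigW 1 ((ks.drop i).reverse)))

/-- `ψ : yH → H¹`, linear extension. -/
noncomputable def psi (h : H1) : H1 := h.sum fun ks c => c • psiW ks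

/-- `ψ̄` on words: `ψ̄(z_{k₁}⋯z_{k_r}) = Σ_{i=0}^{r-1} (-1)^{r-i} z_{k₁}⋯z_{k_i} ш̃ σ₁(z_{k_r}⋯z_{k_{i+1}})`. -/
noncomputable def psibW (ks : List ℕ+) : H1 :=
  ∑ i ∈ Finset.range ks.length,
    ((-1 : ℚ)) ^ (ks.length - i) • sht (W (ks.take i)) (sigW 1 ((ks.drop i).reverse))

/-- `ψ̄ : yH → H¹`, linear extension. -/
noncomputable def psib (h : H1) : H1 := h.sum fun ks c => c • psibW ks

/-- `ρ` on words:
`ρ(z_{k₁}⋯z_{k_r}) = Σ_{i=1}^{r} (-1)^{r-i} (z_{k₁}⋯z_{k_{i-1}} ш̃ z_{k_r}⋯z_{k_{i+1}}) z_{k_i}`. -/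
noncomputable def rhoW (ks : List ℕ+) : H1 :=
  ∑ i : Fin ks.length, ((-1 : ℚ)) ^ (ks.length - 1 - (i : ℕ)) •
    mulRk (ks.get i) (sht (W (ks.take (i : ℕ))) (W ((ks.drop ((i : ℕ) + 1)).reverse)))

/-- `ρ : yH → yH`, linear extension. -/
noncomputable def rho (h : H1) : H1 := h.sum fun ks c => c • rhoW ks

/-- `yH ⊆ H¹`: the span of the nonempty words `z_{k₁}⋯z_{k_r}` (`r ≥ 1`). -/
noncomputable def yH1 : Submodule ℚ H1 := Submodule.span ℚ {h | ∃ k ks, h = W (k :: ks)}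

/-- `yH ∗ yH`: the ℚ-span of the harmonic products `w₁ ∗ w₂` with `w₁, w₂ ∈ yH`. -/
noncomputable def harmSpan : Submodule ℚ H1 :=
  Submodule.span ℚ {h | ∃ u ∈ yH1, ∃ v ∈ yH1, h = harm u v}

/-- `yH ш̃ yH`: the ℚ-span of the products `w₁ ш̃ w₂` with `w₁, w₂ ∈ yH`. -/
noncomputable def shtSpan : Submodule ℚ H1 :=
  Submodule.span ℚ {h | ∃ u ∈ yH1, ∃ v ∈ yH1, h = sht u v}

/-- `yHx ⊆ H¹`: the span of the words `z_{k₁}⋯z_{k_r}` with `r ≥ 1` and `k_r ≥ 2`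
(the words beginning with `y` and ending with `x`). -/
noncomputable def yHx1 : Submodule ℚ H1 :=
  Submodule.span ℚ {h | ∃ (ks : List ℕ+) (hne : ks ≠ []), 2 ≤ ks.getLast hne ∧ h = W ks}


/-! ### Auxiliary lemmas -/

section Aux

open Finsupp

/-- Strip a trailing `z₁`. -/
noncomputable def D1 (h : H1) : H1 :=
  Finsupp.comapDomain (fun u : List ℕ+ => u ++ [1]) h
    ((List.append_left_injective [1]).injOn)

@[simp] lemma D1_apply (h : H1) (u : List ℕ+) : D1 h u = h (u ++ [1]) := rfl

lemma D1_zero : D1 0 = 0 := by ext u; simp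
lemma D1_add (g h : H1) : D1 (g + h) = D1 g + D1 h := by ext u; simp
lemma D1_smul (c : ℚ) (h : H1) : D1 (c • h) = c • D1 h := by ext u; simp
lemma D1_neg (h : H1) : D1 (-h) = -(D1 h) := by ext u; simp

lemma D1_finsuppSum (h : H1) (f : List ℕ+ → ℚ → H1) :
    D1 (h.sum f) = h.sum fun a c => D1 (f a c) := by
  ext u
  rw [D1_apply, Finsupp.sum_apply, Finsupp.sum_apply]
  exact Finset.sum_congr rfl fun a _ => rfl

lemma D1_finsetSum {ι : Type*} (s : Finset ι) (f : ι → H1) :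
    D1 (∑ i ∈ s, f i) = ∑ i ∈ s, D1 (f i) := by
  ext u
  rw [D1_apply, Finset.sum_apply', Finset.sum_apply']
  exact Finset.sum_congr rfl fun a _ => rfl

lemma W_apply (l m : List ℕ+) : W l m = if l = m then 1 else 0 := by
  rw [W, Finsupp.single_apply]

lemma D1_W_nil : D1 (W []) = 0 := by
  ext u; simp [W_apply]

lemma D1_W_concat (u : List ℕ+) (a : ℕ+) :
    D1 (W (u ++ [a])) = if a = 1 then W u else 0 := by
  ext w
  rcases eq_or_ne a 1 with rfl | ha
  · rw [if_pos rfl, D1_apply, W_apply, W_apply]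
    exact if_congr ⟨fun h => List.append_inj_left' h rfl, fun h => by rw [h]⟩ rfl rfl
  · rw [if_neg ha]
    simp only [D1_apply, W_apply, Finsupp.coe_zero, Pi.zero_apply]
    rw [if_neg]
    intro hc
    have h2 := congrArg List.getLast? hc
    rw [List.getLast?_concat, List.getLast?_concat] at h2
    exact ha (by injection h2)

end Aux

section ConsL

lemma consL_apply_nil (k : ℕ+) (h : H1) : consL k h [] = 0 := by
  rw [consL, Finsupp.mapDomain_notin_range]
  rintro ⟨w', hw'⟩
  simp at hw'

lemma consL_apply_cons (k : ℕ+) (h : H1) (a : ℕ+) (w : List ℕ+) :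
    consL k h (a :: w) = if a = k then h w else 0 := by
  rcases eq_or_ne a k with rfl | hne
  · rw [if_pos rfl, consL, Finsupp.mapDomain_apply List.cons_injective]
  · rw [if_neg hne, consL, Finsupp.mapDomain_notin_range]
    rintro ⟨w', hw'⟩
    simp only [List.cons.injEq] at hw'
    exact hne hw'.1.symm

lemma consL_W (k : ℕ+) (u : List ℕ+) : consL k (W u) = W (k :: u) := by
  rw [consL, W, Finsupp.mapDomain_single, W]

lemma consL_zero (k : ℕ+) : consL k (0 : H1) = 0 := Finsupp.mapDomain_zero

lemma consL_add (k : ℕ+) (g h : H1) : consL k (g + h) = consL k g + consL k h :=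
  Finsupp.mapDomain_add

lemma consL_smul (k : ℕ+) (c : ℚ) (h : H1) : consL k (c • h) = c • consL k h :=
  Finsupp.mapDomain_smul c h

lemma consL_neg (k : ℕ+) (h : H1) : consL k (-h) = -(consL k h) := by
  have := consL_smul k (-1) h
  simpa using this

lemma consL_finsuppSum (k : ℕ+) (h : H1) (f : List ℕ+ → ℚ → H1) :
    consL k (h.sum f) = h.sum fun a c => consL k (f a c) :=
  map_finsuppSum (Finsupp.mapDomain.addMonoidHom (fun w => k :: w)) h f

lemma consL_finsetSum {ι : Type*} (k : ℕ+) (s : Finset ι) (f : ι → H1) :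
    consL k (∑ i ∈ s, f i) = ∑ i ∈ s, consL k (f i) :=
  map_sum (Finsupp.mapDomain.addMonoidHom (fun w => k :: w)) f s

lemma mulRk_W (a : ℕ+) (u : List ℕ+) : mulRk a (W u) = W (u ++ [a]) := by
  rw [mulRk, W, Finsupp.mapDomain_single, W]

lemma mulRk_zero (a : ℕ+) : mulRk a (0 : H1) = 0 := Finsupp.mapDomain_zero

lemma mulRk_consL (a k : ℕ+) (h : H1) : mulRk a (consL k h) = consL k (mulRk a h) := by
  rw [mulRk, consL, ← Finsupp.mapDomain_comp, mulRk, consL, ← Finsupp.mapDomain_comp]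
  rfl

lemma D1_consL (k : ℕ+) (h : H1) :
    D1 (consL k h) = consL k (D1 h) + (if k = 1 then h [] else 0) • W [] := by
  ext w
  cases w with
  | nil =>
      rw [D1_apply, List.nil_append, Finsupp.add_apply, consL_apply_nil,
        consL_apply_cons]
      rcases eq_or_ne k 1 with rfl | hk
      · simp [W_apply]
      · rw [if_neg (fun h' => hk h'.symm), if_neg hk]
        simp
  | cons a w' =>
      rw [D1_apply, List.cons_append, consL_apply_cons, Finsupp.add_apply,
        consL_apply_cons]
      simp only [Finsupp.smul_apply, W_apply, smul_eq_mul]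
      rw [if_neg (by simp : ¬ ([] : List ℕ+) = a :: w')]
      simp [D1_apply]

end ConsL

section HarmLemmas

lemma harmW_nil (v : List ℕ+) : harmW [] v = W v := by rw [harmW]

lemma harmW_cons_nil (k : ℕ+) (u : List ℕ+) : harmW (k :: u) [] = W (k :: u) := by
  simp [harmW]

lemma harmW_nil_right (u : List ℕ+) : harmW u [] = W u := by
  cases u with
  | nil => rw [harmW_nil]
  | cons k u => rw [harmW_cons_nil]

lemma harmW_cons_cons (k l : ℕ+) (u v : List ℕ+) :
    harmW (k :: u) (l :: v) =
      consL k (harmW u (l :: v)) + consL l (harmW (k :: u) v) + consL (k + l) (harmW u v) := by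
  rw [harmW]

lemma harm_zero_left (h : H1) : harm 0 h = 0 := Finsupp.sum_zero_index

lemma harm_zero_right (g : H1) : harm g 0 = 0 := by
  rw [harm]
  simp [Finsupp.sum_zero_index]

lemma harm_W_left (a : List ℕ+) (h : H1) :
    harm (W a) h = h.sum fun v d => d • harmW a v := by
  rw [harm, W, Finsupp.sum_single_index]
  · simp only [one_mul]
  · simp [Finsupp.sum_zero_index]

lemma harm_W_W (a b : List ℕ+) : harm (W a) (W b) = harmW a b := by
  rw [harm_W_left, W, Finsupp.sum_single_index] <;> simp

lemma harm_single_right (g : H1) (v : List ℕ+) (d : ℚ) :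
    harm g (Finsupp.single v d) = g.sum fun u c => (c * d) • harmW u v := by
  rw [harm]
  exact Finsupp.sum_congr fun u _ => Finsupp.sum_single_index (by simp)

lemma harm_W_right (g : H1) (b : List ℕ+) :
    harm g (W b) = g.sum fun u c => c • harmW u b := by
  rw [W, harm_single_right]
  simp only [mul_one]

lemma harm_add_left (g₁ g₂ h : H1) : harm (g₁ + g₂) h = harm g₁ h + harm g₂ h := by
  rw [harm, harm, harm, Finsupp.sum_add_index'] <;> simp [add_mul, add_smul, Finsupp.sum_add]

lemma harm_add_right (g h₁ h₂ : H1) : harm g (h₁ + h₂) = harm g h₁ + harm g h₂ := by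
  rw [harm, harm, harm, ← Finsupp.sum_add]
  refine Finsupp.sum_congr fun u _ => ?_
  rw [Finsupp.sum_add_index'] <;> simp [mul_add, add_smul]

lemma harm_smul_left (c : ℚ) (g h : H1) : harm (c • g) h = c • harm g h := by
  rw [harm, harm, Finsupp.sum_smul_index' (fun u => by simp), Finsupp.smul_sum]
  refine Finsupp.sum_congr fun u _ => ?_
  rw [Finsupp.smul_sum]
  refine Finsupp.sum_congr fun v _ => ?_
  rw [smul_eq_mul, smul_smul, mul_assoc]

lemma harm_smul_right (c : ℚ) (g h : H1) : harm g (c • h) = c • harm g h := by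
  rw [harm, harm, Finsupp.smul_sum]
  refine Finsupp.sum_congr fun u cu => ?_
  rw [Finsupp.sum_smul_index' (fun v => by simp), Finsupp.smul_sum]
  refine Finsupp.sum_congr fun v _ => ?_
  rw [smul_eq_mul, smul_smul, mul_left_comm]

lemma harm_neg_right (g h : H1) : harm g (-h) = -(harm g h) := by
  have := harm_smul_right (-1) g h
  simpa using this

end HarmLemmas

section HarmMore

lemma harm_Wnil_left (h : H1) : harm (W []) h = h := by
  rw [harm_W_left]
  have : ∀ v d, d • harmW [] v = Finsupp.single v d := by
    intro v d
    rw [harmW_nil, W, Finsupp.smul_single', mul_one]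
  rw [Finsupp.sum_congr fun v _ => this v _]
  exact Finsupp.sum_single h

lemma harm_Wnil_right (g : H1) : harm g (W []) = g := by
  rw [harm_W_right]
  have : ∀ u c, c • harmW u [] = Finsupp.single u c := by
    intro u c
    rw [harmW_nil_right, W, Finsupp.smul_single', mul_one]
  rw [Finsupp.sum_congr fun u _ => this u _]
  exact Finsupp.sum_single g

lemma harmW_apply_nil (u v : List ℕ+) :
    harmW u v [] = if u = [] ∧ v = [] then 1 else 0 := by
  match u, v with
  | [], v => rw [harmW_nil, W_apply]; by_cases h : v = [] <;> simp [h]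
  | k :: u, [] => rw [harmW_cons_nil, W_apply]; simp
  | k :: u, l :: v =>
      rw [harmW_cons_cons, Finsupp.add_apply, Finsupp.add_apply,
        consL_apply_nil, consL_apply_nil, consL_apply_nil]
      simp

lemma harm_consL_left (k : ℕ+) (g h : H1) :
    harm (consL k g) h = g.sum fun u c => h.sum fun v d => (c * d) • harmW (k :: u) v := by
  rw [harm, consL]
  exact Finsupp.sum_mapDomain_index (by simp)
    (by intros; simp only [add_mul, add_smul, Finsupp.sum_add])

lemma harm_consL_right (l : ℕ+) (g h : H1) :
    harm g (consL l h) = g.sum fun u c => h.sum fun v d => (c * d) • harmW u (l :: v) := by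
  rw [harm]
  refine Finsupp.sum_congr fun u _ => ?_
  rw [consL]
  exact Finsupp.sum_mapDomain_index (by simp) (by intros; rw [mul_add, add_smul])

lemma harm_consL_consL (k l : ℕ+) (g h : H1) :
    harm (consL k g) (consL l h) =
      consL k (harm g (consL l h)) + consL l (harm (consL k g) h)
        + consL (k + l) (harm g h) := by
  have expand : harm (consL k g) (consL l h) =
      g.sum fun u c => h.sum fun v d => (c * d) • harmW (k :: u) (l :: v) := by
    rw [harm_consL_left]
    refine Finsupp.sum_congr fun u _ => ?_
    rw [consL]
    exact Finsupp.sum_mapDomain_index (by simp) (by intros; rw [mul_add, add_smul])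
  have e1 : consL k (harm g (consL l h)) =
      g.sum fun u c => h.sum fun v d => (c * d) • consL k (harmW u (l :: v)) := by
    rw [harm_consL_right, consL_finsuppSum]
    refine Finsupp.sum_congr fun u _ => ?_
    rw [consL_finsuppSum]
    exact Finsupp.sum_congr fun v _ => consL_smul _ _ _
  have e2 : consL l (harm (consL k g) h) =
      g.sum fun u c => h.sum fun v d => (c * d) • consL l (harmW (k :: u) v) := by
    rw [harm_consL_left, consL_finsuppSum]
    refine Finsupp.sum_congr fun u _ => ?_
    rw [consL_finsuppSum]
    exact Finsupp.sum_congr fun v _ => consL_smul _ _ _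
  have e3 : consL (k + l) (harm g h) =
      g.sum fun u c => h.sum fun v d => (c * d) • consL (k + l) (harmW u v) := by
    rw [harm, consL_finsuppSum]
    refine Finsupp.sum_congr fun u _ => ?_
    rw [consL_finsuppSum]
    exact Finsupp.sum_congr fun v _ => consL_smul _ _ _
  rw [expand, e1, e2, e3, ← Finsupp.sum_add, ← Finsupp.sum_add]
  refine Finsupp.sum_congr fun u _ => ?_
  rw [← Finsupp.sum_add, ← Finsupp.sum_add]
  refine Finsupp.sum_congr fun v _ => ?_
  rw [harmW_cons_cons, smul_add, smul_add]

end HarmMore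

section Derivation

lemma pnat_add_ne_one (k l : ℕ+) : k + l ≠ 1 := by
  intro hh
  have h1 : k < k + l := PNat.lt_add_right k l
  rw [hh] at h1
  exact absurd h1 (not_lt.mpr k.one_le)

lemma key_step (k l : ℕ+) (A B P Q : H1) (ck cl : ℚ) :
    consL k (harm A (consL l Q) + harm P (consL l B + cl • W []))
      + consL l (harm (consL k A + ck • W []) Q + harm (consL k P) B)
      + consL (k + l) (harm A Q + harm P B)
    = harm (consL k A + ck • W []) (consL l Q)
      + harm (consL k P) (consL l B + cl • W []) := by
  simp only [harm_add_left, harm_add_right, harm_smul_left, harm_smul_right,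
    harm_Wnil_left, harm_Wnil_right, harm_consL_consL, consL_add, consL_smul]
  abel

theorem D1_harmW (a b : List ℕ+) :
    D1 (harmW a b) = harm (D1 (W a)) (W b) + harm (W a) (D1 (W b)) := by
  match a, b with
  | [], b =>
      rw [harmW_nil, D1_W_nil, harm_zero_left, harm_Wnil_left, zero_add]
  | k :: u, [] =>
      rw [harmW_cons_nil, D1_W_nil, harm_zero_right, harm_Wnil_right, add_zero]
  | k :: u, l :: v =>
      have ih1 := D1_harmW u (l :: v)
      have ih2 := D1_harmW (k :: u) v
      have ih3 := D1_harmW u v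
      rw [harmW_cons_cons, D1_add, D1_add, D1_consL, D1_consL, D1_consL,
        ih1, ih2, ih3, harmW_apply_nil, harmW_apply_nil, harmW_apply_nil]
      rw [if_neg (pnat_add_ne_one k l)]
      simp only [List.cons_ne_nil, and_false, false_and, if_false, ite_self, zero_smul,
        add_zero]
      have hku : D1 (W (k :: u)) = consL k (D1 (W u))
          + (if k = 1 then (W u) [] else 0) • W [] := by
        rw [← consL_W, D1_consL]
      have hlv : D1 (W (l :: v)) = consL l (D1 (W v))
          + (if l = 1 then (W v) [] else 0) • W [] := by
        rw [← consL_W, D1_consL]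
      rw [hku, hlv, ← consL_W k u, ← consL_W l v]
      exact key_step k l (D1 (W u)) (D1 (W v)) (W u) (W v) _ _
  termination_by a.length + b.length

lemma D1_harm_W_left (a : List ℕ+) (h : H1) :
    D1 (harm (W a) h) = harm (D1 (W a)) h + harm (W a) (D1 h) := by
  induction h using Finsupp.induction with
  | zero => simp [harm_zero_right, D1_zero]
  | single_add v d f hfv hd ih =>
      rw [harm_add_right, D1_add, ih, D1_add, harm_add_right, harm_add_right]
      have hW : (Finsupp.single v d : H1) = d • W v := by
        rw [W, Finsupp.smul_single', mul_one]
      have hs : D1 (harm (W a) (Finsupp.single v d)) =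
          harm (D1 (W a)) (Finsupp.single v d) + harm (W a) (D1 (Finsupp.single v d)) := by
        rw [hW, harm_smul_right, D1_smul, D1_smul, harm_smul_right, harm_smul_right,
          harm_W_W, D1_harmW, smul_add]
      rw [hs]
      abel

end Derivation

section StLemmas

lemma StW_nil : StW [] = W [] := by simp [StW]
lemma StW_single (k : ℕ+) : StW [k] = W [k] := by simp [StW]
lemma StW_cons_cons (k l : ℕ+) (ks : List ℕ+) :
    StW (k :: l :: ks) = consL k (StW (l :: ks)) + StW ((k + l) :: ks) := by
  rw [StW]

theorem StW_apply_nil (m : List ℕ+) : StW m [] = if m = [] then 1 else 0 := by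
  match m with
  | [] => rw [StW_nil, W_apply]
  | [k] => rw [StW_single, W_apply]
  | k :: l :: ks =>
      rw [StW_cons_cons, Finsupp.add_apply, consL_apply_nil,
        StW_apply_nil ((k + l) :: ks)]
      simp
  termination_by m.length

lemma concat_ne_concat_one {a : ℕ+} (ha : a ≠ 1) (w u : List ℕ+) :
    w ++ [a] ≠ u ++ [1] := by
  intro hc
  have h2 := congrArg List.getLast? hc
  rw [List.getLast?_concat, List.getLast?_concat] at h2
  exact ha (by injection h2)

theorem D1_StW_nconcat (m : List ℕ+) (hm : ∀ u, m ≠ u ++ [1]) : D1 (StW m) = 0 := by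
  match m with
  | [] => rw [StW_nil, D1_W_nil]
  | [k] =>
      have hk : k ≠ 1 := fun e => hm [] (by rw [e]; rfl)
      rw [StW_single]
      have := D1_W_concat [] k
      rw [List.nil_append] at this
      rw [this, if_neg hk]
  | k :: l :: ks =>
      have h1 : ∀ u, l :: ks ≠ u ++ [1] := by
        intro u h
        exact hm (k :: u) (by rw [h]; rfl)
      have h2 : ∀ u, (k + l) :: ks ≠ u ++ [1] := by
        intro u h
        cases u with
        | nil =>
            simp only [List.nil_append, List.cons.injEq] at h
            exact pnat_add_ne_one k l h.1
        | cons a u' =>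
            simp only [List.cons_append, List.cons.injEq] at h
            exact hm (k :: l :: u') (by rw [h.2]; rfl)
      rw [StW_cons_cons, D1_add, D1_consL, StW_apply_nil,
        D1_StW_nconcat (l :: ks) h1, D1_StW_nconcat ((k + l) :: ks) h2, consL_zero]
      simp
  termination_by m.length

theorem D1_StW_concat (u : List ℕ+) : D1 (StW (u ++ [1])) = StW u := by
  match u with
  | [] =>
      rw [List.nil_append, StW_single, StW_nil]
      have := D1_W_concat [] 1
      rw [List.nil_append] at this
      rw [this, if_pos rfl]
  | [k] =>
      have e1 : ([k] ++ [1] : List ℕ+) = k :: 1 :: [] := rfl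
      rw [e1, StW_cons_cons, D1_add, D1_consL, StW_single]
      have d1 : D1 (W [(1 : ℕ+)]) = W [] := by
        have := D1_W_concat [] 1
        rw [List.nil_append] at this
        rw [this, if_pos rfl]
      have d2 : D1 (StW [k + 1]) = 0 := by
        rw [StW_single]
        have := D1_W_concat [] (k + 1)
        rw [List.nil_append] at this
        rw [this, if_neg (pnat_add_ne_one k 1)]
      rw [d1, d2, W_apply, StW_single]
      simp [consL_W]
  | k :: l :: us =>
      have e1 : ((k :: l :: us) ++ [1] : List ℕ+) = k :: l :: (us ++ [1]) := rfl
      have r1 : D1 (StW (l :: (us ++ [1]))) = StW (l :: us) := by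
        have := D1_StW_concat (l :: us)
        rwa [List.cons_append] at this
      have r2 : D1 (StW ((k + l) :: (us ++ [1]))) = StW ((k + l) :: us) := by
        have := D1_StW_concat ((k + l) :: us)
        rwa [List.cons_append] at this
      rw [e1, StW_cons_cons, D1_add, D1_consL, StW_apply_nil, r1, r2, StW_cons_cons]
      simp
  termination_by u.length

lemma D1_SttW_concat (w : List ℕ+) (a : ℕ+) :
    D1 (SttW (w ++ [a])) = if a = 1 then -(SttW w) else 0 := by
  rw [SttW, D1_smul, List.length_append, List.length_singleton]
  rcases eq_or_ne a 1 with rfl | ha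
  · rw [if_pos rfl, D1_StW_concat, SttW, pow_succ]
    simp [neg_smul]
  · rw [if_neg ha, D1_StW_nconcat _ (concat_ne_concat_one ha w), smul_zero]

lemma Stt_W (m : List ℕ+) : Stt (W m) = SttW m := by
  rw [Stt, W, Finsupp.sum_single_index] <;> simp

lemma Stt_zero : Stt 0 = 0 := Finsupp.sum_zero_index

lemma Stt_add (g h : H1) : Stt (g + h) = Stt g + Stt h := by
  rw [Stt, Stt, Stt]
  exact Finsupp.sum_add_index' (by simp) (by intros; rw [add_smul])

lemma Stt_smul (c : ℚ) (h : H1) : Stt (c • h) = c • Stt h := by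
  rw [Stt, Stt, Finsupp.sum_smul_index' (fun i => by simp), Finsupp.smul_sum]
  exact Finsupp.sum_congr fun w _ => by rw [smul_eq_mul, smul_smul]

lemma Stt_mulRk (a : ℕ+) (h : H1) :
    Stt (mulRk a h) = h.sum fun w c => c • SttW (w ++ [a]) := by
  rw [Stt, mulRk]
  exact Finsupp.sum_mapDomain_index (by simp) (by intros; rw [add_smul])

lemma Stt_apply_nil (h : H1) : Stt h [] = h [] := by
  rw [Stt, Finsupp.sum_apply]
  have he : ∀ (w : List ℕ+) (c : ℚ), (c • SttW w) [] = Finsupp.single w c [] := by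
    intro w c
    cases w with
    | nil =>
        rw [SttW, StW_nil]
        simp [W_apply]
    | cons a w' =>
        rw [Finsupp.smul_apply, SttW, Finsupp.smul_apply, StW_apply_nil]
        simp [Finsupp.single_apply]
  rw [show (h.sum fun w c => (c • SttW w) []) = h.sum fun w c => Finsupp.single w c []
    from Finsupp.sum_congr fun w _ => he w _]
  rw [← Finsupp.sum_apply, Finsupp.sum_single]

end StLemmas

section SigLemmas

lemma sigW_nil_eq (m : ℕ) : sigW m [] = if m = 0 then W [] else 0 := by
  simp [sigW]

lemma sigW_cons_eq (m : ℕ) (k : ℕ+) (ks : List ℕ+) :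
    sigW m (k :: ks) = ∑ e ∈ Finset.range (m + 1),
      ((((k : ℕ) + e - 1).choose e : ℚ)) • consL (pplus k e) (sigW (m - e) ks) := by
  rw [sigW]

lemma pplus_zero (k : ℕ+) : pplus k 0 = k := rfl

lemma pplus_one_ne_one (a : ℕ+) : pplus a 1 ≠ 1 := by
  intro h
  have h2 : (a : ℕ) + 1 = 1 := congrArg PNat.val h
  have h3 := a.2
  simp only [PNat.val] at h2 h3
  omega

lemma mulRk_add (a : ℕ+) (g h : H1) : mulRk a (g + h) = mulRk a g + mulRk a h :=
  Finsupp.mapDomain_add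

lemma mulRk_smul (a : ℕ+) (c : ℚ) (h : H1) : mulRk a (c • h) = c • mulRk a h :=
  Finsupp.mapDomain_smul c h

lemma sigW_zero (ks : List ℕ+) : sigW 0 ks = W ks := by
  induction ks with
  | nil => rw [sigW_nil_eq, if_pos rfl]
  | cons k ks ih =>
      rw [sigW_cons_eq, Finset.sum_range_one, ih, pplus_zero, consL_W]
      simp

lemma sigW_one_cons (k : ℕ+) (ks : List ℕ+) :
    sigW 1 (k :: ks) = consL k (sigW 1 ks) + (k : ℚ) • consL (pplus k 1) (W ks) := by
  rw [sigW_cons_eq, Finset.sum_range_succ, Finset.sum_range_one, sigW_zero]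
  norm_num [pplus_zero]

lemma sig1_concat (u : List ℕ+) (a : ℕ+) :
    sigW 1 (u ++ [a]) = mulRk a (sigW 1 u) + (a : ℚ) • W (u ++ [pplus a 1]) := by
  induction u with
  | nil =>
      rw [List.nil_append, sigW_one_cons, sigW_nil_eq, if_neg one_ne_zero,
        consL_zero, mulRk_zero, consL_W, List.nil_append, zero_add]
  | cons j u ih =>
      rw [List.cons_append, sigW_one_cons, ih, sigW_one_cons]
      simp only [mulRk_add, mulRk_smul, mulRk_consL, mulRk_W, consL_add, consL_smul,
        consL_W, List.cons_append]
      abel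

lemma sigW_one_apply_nil (m : List ℕ+) : sigW 1 m [] = 0 := by
  cases m with
  | nil => rw [sigW_nil_eq, if_neg one_ne_zero]; rfl
  | cons k ks =>
      rw [sigW_one_cons, Finsupp.add_apply, Finsupp.smul_apply, consL_apply_nil,
        consL_apply_nil]
      simp

lemma D1_Stt_sig_concat (u : List ℕ+) (a : ℕ+) :
    D1 (Stt (sigW 1 (u ++ [a]))) = if a = 1 then -(Stt (sigW 1 u)) else 0 := by
  rw [sig1_concat, Stt_add, Stt_smul, Stt_W, D1_add, D1_smul]
  have p2 : D1 (SttW (u ++ [pplus a 1])) = 0 := by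
    rw [D1_SttW_concat, if_neg (pplus_one_ne_one a)]
  rw [p2, smul_zero, add_zero, Stt_mulRk, D1_finsuppSum]
  rcases eq_or_ne a 1 with rfl | ha
  · rw [if_pos rfl]
    have he : ∀ (w : List ℕ+) (c : ℚ),
        D1 (c • SttW (w ++ [1])) = -(c • SttW w) := by
      intro w c
      rw [D1_smul, D1_SttW_concat, if_pos rfl, smul_neg]
    rw [show ((sigW 1 u).sum fun w c => D1 (c • SttW (w ++ [1])))
        = (sigW 1 u).sum fun w c => -(c • SttW w)
      from Finsupp.sum_congr fun w _ => he w _]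
    rw [Stt, Finsupp.sum, Finsupp.sum, ← Finset.sum_neg_distrib]
  · rw [if_neg ha]
    have he : ∀ (w : List ℕ+) (c : ℚ), D1 (c • SttW (w ++ [a])) = 0 := by
      intro w c
      rw [D1_smul, D1_SttW_concat, if_neg ha, smul_zero]
    rw [show ((sigW 1 u).sum fun w c => D1 (c • SttW (w ++ [a])))
        = (sigW 1 u).sum fun w c => (0 : H1)
      from Finsupp.sum_congr fun w _ => he w _]
    exact Finset.sum_const_zero

end SigLemmas

section Final

lemma harm_W_apply_nil (a : List ℕ+) (h : H1) :
    harm (W a) h [] = if a = [] then h [] else 0 := by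
  rcases eq_or_ne a [] with rfl | ha
  · rw [harm_Wnil_left, if_pos rfl]
  · rw [if_neg ha, harm_W_left, Finsupp.sum_apply, Finsupp.sum]
    refine Finset.sum_eq_zero fun v _ => ?_
    rw [Finsupp.smul_apply, harmW_apply_nil, if_neg (fun hc => ha hc.1), smul_zero]

lemma psiW_apply_nil (ks : List ℕ+) : psiW ks [] = 0 := by
  rw [psiW, Finset.sum_apply']
  refine Finset.sum_eq_zero fun i _ => ?_
  rw [harm_W_apply_nil]
  by_cases h : ks.take i = []
  · rw [if_pos h, Stt_apply_nil, sigW_one_apply_nil]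
  · rw [if_neg h]

/-- The telescoping term in `D1 (psiW ks)`. -/
noncomputable def Gaux (ks : List ℕ+) (j : ℕ) : H1 :=
  if ks[j]? = some 1 then
    harm (W (ks.take j)) (Stt (sigW 1 ((ks.drop (j + 1)).reverse))) else 0

lemma Gaux_last (ks : List ℕ+) (n : ℕ) (hn : ks.length = n + 1) : Gaux ks n = 0 := by
  have hd : ks.drop (n + 1) = [] := List.drop_eq_nil_of_le (by rw [hn])
  rw [Gaux, hd, List.reverse_nil, sigW_nil_eq, if_neg one_ne_zero, Stt_zero,
    harm_zero_right, ite_self]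

theorem D1_psiW (ks : List ℕ+) : D1 (psiW ks) = 0 := by
  cases hn : ks.length with
  | zero =>
      rw [psiW, hn, Finset.range_zero, Finset.sum_empty, D1_zero]
  | succ n =>
      rw [psiW, hn, D1_finsetSum]
      have key : ∀ i ∈ Finset.range (n + 1),
          D1 (harm (W (ks.take i)) (Stt (sigW 1 ((ks.drop i).reverse))))
            = (if i = 0 then 0 else Gaux ks (i - 1)) - Gaux ks i := by
        intro i hi
        have hilt : i < ks.length := by rw [hn]; exact Finset.mem_range.mp hi
        rw [D1_harm_W_left]
        have p2 : harm (W (ks.take i)) (D1 (Stt (sigW 1 ((ks.drop i).reverse))))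
            = -(Gaux ks i) := by
          have hdrop : ks.drop i = ks[i] :: ks.drop (i + 1) :=
            List.drop_eq_getElem_cons hilt
          rw [hdrop, List.reverse_cons, D1_Stt_sig_concat, Gaux,
            List.getElem?_eq_getElem hilt]
          by_cases hk : ks[i] = 1
          · rw [if_pos hk, if_pos (by rw [hk]), harm_neg_right]
          · rw [if_neg hk, if_neg (fun hc => hk (Option.some_inj.mp hc)),
              harm_zero_right, neg_zero]
        have p1 : harm (D1 (W (ks.take i))) (Stt (sigW 1 ((ks.drop i).reverse)))
            = (if i = 0 then 0 else Gaux ks (i - 1)) := by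
          cases i with
          | zero => rw [List.take_zero, D1_W_nil, harm_zero_left, if_pos rfl]
          | succ j =>
              have hj : j < ks.length := Nat.lt_of_succ_lt hilt
              have htake : ks.take (j + 1) = ks.take j ++ [ks[j]] := by
                rw [List.take_succ, List.getElem?_eq_getElem hj]
                rfl
              rw [htake, D1_W_concat, if_neg (Nat.succ_ne_zero j), Nat.succ_sub_one,
                Gaux, List.getElem?_eq_getElem hj]
              by_cases hk : ks[j] = 1
              · rw [if_pos hk, if_pos (by rw [hk])]
              · rw [if_neg hk, if_neg (fun hc => hk (Option.some_inj.mp hc)),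
                  harm_zero_left]
        rw [p1, p2]
        exact (sub_eq_add_neg _ _).symm
      rw [Finset.sum_congr rfl key, Finset.sum_sub_distrib,
        Finset.sum_range_succ' (fun i => if i = 0 then 0 else Gaux ks (i - 1)) n,
        Finset.sum_range_succ (Gaux ks) n, Gaux_last ks n hn]
      simp

lemma mem_yHx1_of (h : H1) (h0 : h [] = 0) (h1 : ∀ u, h (u ++ [1]) = 0) :
    h ∈ yHx1 := by
  rw [← Finsupp.sum_single h, Finsupp.sum]
  refine Submodule.sum_mem _ fun l hl => ?_
  have hne : h l ≠ 0 := Finsupp.mem_support_iff.mp hl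
  have hlne : l ≠ [] := by rintro rfl; exact hne h0
  have hlast : (2 : ℕ+) ≤ l.getLast hlne := by
    by_contra hlt
    push_neg at hlt
    have hv : (l.getLast hlne : ℕ) < 2 := by exact_mod_cast hlt
    have hv1 : 0 < (l.getLast hlne : ℕ) := (l.getLast hlne).2
    have hone : (l.getLast hlne : ℕ) = 1 := by omega
    have h1' : l.getLast hlne = 1 := by
      apply PNat.coe_injective
      rw [hone]
      rfl
    have hl2 : l = l.dropLast ++ [1] := by
      conv_lhs => rw [← List.dropLast_append_getLast hlne]
      rw [h1']
    exact hne (by rw [hl2]; exact h1 _)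
  have hsingle : Finsupp.single l (h l) = (h l) • W l := by
    rw [W, Finsupp.smul_single', mul_one]
  rw [hsingle]
  exact Submodule.smul_mem _ _ (Submodule.subset_span ⟨l, hlne, hlast, rfl⟩)

end Final

/-- Lemma 6: `ψ(yH) ⊆ yHx`. -/
theorem psi_mem_yHx (w : H1) (hw : w ∈ yH1) : psi w ∈ yHx1 := by
  rw [psi, Finsupp.sum]
  refine Submodule.sum_mem _ fun ks _ => Submodule.smul_mem _ _ ?_
  refine mem_yHx1_of _ (psiW_apply_nil ks) fun u => ?_
  have h2 : D1 (psiW ks) u = 0 := by rw [D1_psiW]; rfl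
  rwa [D1_apply] at h2
end

section
/- For all positive integers r and k₁,…,k_r, the right-nested Lie bracket expands as [X_{k₁},[X_{k₂},[…,[X_{k_{r−1}},X_{k_r}]…]]] = Σ_{i=1}^{r} (−1)^{r−i} Σ_σ X_{k_{σ(1)}}⋯X_{k_{σ(r)}}, where the inner sum is over all bijections σ of {1,…,r} satisfying σ(1) < σ(2) < ⋯ < σ(i−1) < σ(i) > σ(i+1) > ⋯ > σ(r). -/
open scoped BigOperators

/-- `Y`: the free associative ℚ-algebra on the noncommuting variables `X₁, X₂, …`. -/
abbrev Y : Type := MonoidAlgebra ℚ (FreeMonoid ℕ+)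

/-- The word `X_{k₁}⋯X_{k_r} ∈ Y`. -/
noncomputable def Xw (ks : List ℕ+) : Y := MonoidAlgebra.single (FreeMonoid.ofList ks) 1

/-- The right-nested Lie bracket `[X_{k₁},[X_{k₂},[…,[X_{k_{r-1}},X_{k_r}]…]]]`
(with `[a,b] = ab - ba`, and equal to `X_{k₁}` for `r = 1`). -/
noncomputable def nbrack : List ℕ+ → Y
  | [] => 0
  | [k] => Xw [k]
  | k :: l :: ks => Xw [k] * nbrack (l :: ks) - nbrack (l :: ks) * Xw [k]

/-- The pairing `⟨·,·⟩ : Y × yH → ℚ`, with `⟨X_{k₁}⋯X_{k_r}, z_{l₁}⋯z_{l_s}⟩ = 1` if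
`(k₁,…,k_r) = (l₁,…,l_s)` and `0` otherwise. -/
noncomputable def pairY (a : Y) (h : H1) : ℚ :=
  Finsupp.sum a.coeff fun w c => c * h (FreeMonoid.toList w)

section NbrackExpansionAux

open scoped Classical

/-- Unimodality with peak at `i`. -/
def Pcond {m : ℕ} (σ : Equiv.Perm (Fin m)) (i : Fin m) : Prop :=
  (∀ a b : Fin m, a < b → b ≤ i → σ a < σ b) ∧
  (∀ a b : Fin m, i ≤ a → a < b → σ b < σ a)

/-- The position of the maximum. -/
def peakP {n : ℕ} (σ : Equiv.Perm (Fin (n + 1))) : Fin (n + 1) := σ.symm (Fin.last n)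

/-- Unimodal permutations. -/
def Uni {n : ℕ} (σ : Equiv.Perm (Fin (n + 1))) : Prop := Pcond σ (peakP σ)

theorem Pcond.apply_le {n : ℕ} {σ : Equiv.Perm (Fin (n + 1))} {i : Fin (n + 1)}
    (h : Pcond σ i) (j : Fin (n + 1)) : σ j ≤ σ i := by
  rcases lt_trichotomy j i with hj | rfl | hj
  · exact (h.1 j i hj le_rfl).le
  · exact le_rfl
  · exact (h.2 i j le_rfl hj).le

theorem Pcond.eq_peak {n : ℕ} {σ : Equiv.Perm (Fin (n + 1))} {i : Fin (n + 1)}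
    (h : Pcond σ i) : i = peakP σ := by
  have h1 : σ i = Fin.last n := by
    refine le_antisymm (Fin.le_last _) ?_
    have := h.apply_le (σ.symm (Fin.last n))
    simpa using this
  have := congrArg σ.symm h1
  simpa [peakP] using this

theorem Pcond.uni {n : ℕ} {σ : Equiv.Perm (Fin (n + 1))} {i : Fin (n + 1)}
    (h : Pcond σ i) : Uni σ := by unfold Uni; rw [← h.eq_peak]; exact h

/-- Sign-weighted sum over unimodal permutations. -/
noncomputable def Gsum (n : ℕ) (f : Fin (n + 1) → ℕ+) : Y :=
  ∑ σ ∈ Finset.univ.filter (fun σ : Equiv.Perm (Fin (n + 1)) => Uni σ),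
    ((-1 : ℚ)) ^ (n - (peakP σ : ℕ)) • Xw (List.ofFn fun j => f (σ j))

def frP {n : ℕ} (τ : Equiv.Perm (Fin (n + 1))) : Equiv.Perm (Fin (n + 2)) :=
  Equiv.Perm.decomposeFin.symm (0, τ)

theorem frP_zero {n : ℕ} (τ : Equiv.Perm (Fin (n + 1))) : frP τ 0 = 0 :=
  Equiv.Perm.decomposeFin_symm_apply_zero 0 τ

theorem frP_succ {n : ℕ} (τ : Equiv.Perm (Fin (n + 1))) (j : Fin (n + 1)) :
    frP τ j.succ = (τ j).succ := by
  simp [frP, Equiv.Perm.decomposeFin_symm_apply_succ]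

def bkP {n : ℕ} (τ : Equiv.Perm (Fin (n + 1))) : Equiv.Perm (Fin (n + 2)) :=
  Fin.revPerm.trans (frP (Fin.revPerm.trans τ))

theorem bkP_last {n : ℕ} (τ : Equiv.Perm (Fin (n + 1))) : bkP τ (Fin.last (n + 1)) = 0 := by
  simp [bkP, Equiv.trans_apply, Fin.revPerm_apply, Fin.rev_last, frP_zero]

theorem bkP_castSucc {n : ℕ} (τ : Equiv.Perm (Fin (n + 1))) (j : Fin (n + 1)) :
    bkP τ j.castSucc = (τ j).succ := by
  simp [bkP, Equiv.trans_apply, Fin.revPerm_apply, Fin.rev_castSucc, frP_succ, Fin.rev_rev]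

theorem peakP_frP {n : ℕ} (τ : Equiv.Perm (Fin (n + 1))) :
    peakP (frP τ) = (peakP τ).succ := by
  have h : frP τ ((peakP τ).succ) = Fin.last (n + 1) := by
    rw [frP_succ]
    have : τ (peakP τ) = Fin.last n := Equiv.apply_symm_apply τ _
    rw [this, Fin.succ_last]
  have := congrArg (frP τ).symm h
  simpa [peakP] using this.symm

theorem peakP_bkP {n : ℕ} (τ : Equiv.Perm (Fin (n + 1))) :
    peakP (bkP τ) = (peakP τ).castSucc := by
  have h : bkP τ ((peakP τ).castSucc) = Fin.last (n + 1) := by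
    rw [bkP_castSucc]
    have : τ (peakP τ) = Fin.last n := Equiv.apply_symm_apply τ _
    rw [this, Fin.succ_last]
  have := congrArg (bkP τ).symm h
  simpa [peakP] using this.symm


theorem pcond_frP {n : ℕ} (τ : Equiv.Perm (Fin (n + 1))) (p : Fin (n + 1)) :
    Pcond (frP τ) p.succ ↔ Pcond τ p := by
  constructor
  · intro h
    constructor
    · intro a b hab hbp
      have := h.1 a.succ b.succ (by simpa [Fin.succ_lt_succ_iff]) (by simpa [Fin.succ_le_succ_iff])
      rw [frP_succ, frP_succ, Fin.succ_lt_succ_iff] at this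
      exact this
    · intro a b hpa hab
      have := h.2 a.succ b.succ (by simpa [Fin.succ_le_succ_iff]) (by simpa [Fin.succ_lt_succ_iff])
      rw [frP_succ, frP_succ, Fin.succ_lt_succ_iff] at this
      exact this
  · intro h
    constructor
    · intro a b hab hbp
      induction b using Fin.cases with
      | zero => exact absurd hab (Fin.not_lt_zero a)
      | succ b' =>
        induction a using Fin.cases with
        | zero =>
          rw [frP_zero, frP_succ]
          exact Fin.succ_pos _
        | succ a' =>
          rw [frP_succ, frP_succ, Fin.succ_lt_succ_iff]
          exact h.1 a' b' (Fin.succ_lt_succ_iff.mp hab) (Fin.succ_le_succ_iff.mp hbp)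
    · intro a b hpa hab
      induction b using Fin.cases with
      | zero => exact absurd hab (Fin.not_lt_zero a)
      | succ b' =>
        induction a using Fin.cases with
        | zero => exact absurd hpa (by simp [Fin.le_zero_iff, Fin.succ_ne_zero])
        | succ a' =>
          rw [frP_succ, frP_succ, Fin.succ_lt_succ_iff]
          exact h.2 a' b' (Fin.succ_le_succ_iff.mp hpa) (Fin.succ_lt_succ_iff.mp hab)

theorem pcond_bkP {n : ℕ} (τ : Equiv.Perm (Fin (n + 1))) (p : Fin (n + 1)) :
    Pcond (bkP τ) p.castSucc ↔ Pcond τ p := by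
  constructor
  · intro h
    constructor
    · intro a b hab hbp
      have := h.1 a.castSucc b.castSucc (by simpa [Fin.castSucc_lt_castSucc_iff])
        (by simpa [Fin.castSucc_le_castSucc_iff])
      rw [bkP_castSucc, bkP_castSucc, Fin.succ_lt_succ_iff] at this
      exact this
    · intro a b hpa hab
      have := h.2 a.castSucc b.castSucc (by simpa [Fin.castSucc_le_castSucc_iff])
        (by simpa [Fin.castSucc_lt_castSucc_iff])
      rw [bkP_castSucc, bkP_castSucc, Fin.succ_lt_succ_iff] at this
      exact this
  · intro h
    constructor
    · intro a b hab hbp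
      induction b using Fin.lastCases with
      | last => exact absurd (lt_of_le_of_lt hbp (Fin.castSucc_lt_last p)) (lt_irrefl _)
      | cast b' =>
        induction a using Fin.lastCases with
        | last => exact absurd (lt_trans hab (Fin.castSucc_lt_last b')) (lt_irrefl _)
        | cast a' =>
          rw [bkP_castSucc, bkP_castSucc, Fin.succ_lt_succ_iff]
          exact h.1 a' b' (Fin.castSucc_lt_castSucc_iff.mp hab) (Fin.castSucc_le_castSucc_iff.mp hbp)
    · intro a b hpa hab
      induction b using Fin.lastCases with
      | last =>
        induction a using Fin.lastCases with
        | last => exact absurd hab (lt_irrefl _)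
        | cast a' =>
          rw [bkP_castSucc, bkP_last]
          exact Fin.succ_pos _
      | cast b' =>
        induction a using Fin.lastCases with
        | last => exact absurd (lt_trans hab (Fin.castSucc_lt_last b')) (lt_irrefl _)
        | cast a' =>
          rw [bkP_castSucc, bkP_castSucc, Fin.succ_lt_succ_iff]
          exact h.2 a' b' (Fin.castSucc_le_castSucc_iff.mp hpa) (Fin.castSucc_lt_castSucc_iff.mp hab)

theorem uni_frP {n : ℕ} (τ : Equiv.Perm (Fin (n + 1))) : Uni (frP τ) ↔ Uni τ := by
  unfold Uni
  rw [peakP_frP, pcond_frP]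

theorem uni_bkP {n : ℕ} (τ : Equiv.Perm (Fin (n + 1))) : Uni (bkP τ) ↔ Uni τ := by
  unfold Uni
  rw [peakP_bkP, pcond_bkP]

theorem Uni.zero_or_last {n : ℕ} {σ : Equiv.Perm (Fin (n + 2))} (h : Uni σ) :
    σ 0 = 0 ∨ σ (Fin.last (n + 1)) = 0 := by
  set j := σ.symm 0 with hj
  have hσj : σ j = 0 := σ.apply_symm_apply 0
  by_cases h0 : j = 0
  · exact Or.inl (h0 ▸ hσj)
  by_cases hl : j = Fin.last (n + 1)
  · exact Or.inr (hl ▸ hσj)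
  exfalso
  rcases le_total j (peakP σ) with hle | hle
  · have := h.1 0 j (Fin.pos_of_ne_zero h0) hle
    rw [hσj] at this
    exact Fin.not_lt_zero _ this
  · have := h.2 j (Fin.last (n + 1)) hle (lt_of_le_of_ne (Fin.le_last j) hl)
    rw [hσj] at this
    exact Fin.not_lt_zero _ this

theorem Xw_cons (a : ℕ+) (w : List ℕ+) : Xw (a :: w) = Xw [a] * Xw w := by
  unfold Xw
  rw [MonoidAlgebra.single_mul_single, one_mul, ← FreeMonoid.ofList_append,
    List.singleton_append]

theorem Xw_concat (a : ℕ+) (w : List ℕ+) : Xw (w ++ [a]) = Xw w * Xw [a] := by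
  unfold Xw
  rw [MonoidAlgebra.single_mul_single, one_mul, ← FreeMonoid.ofList_append]

theorem nbrack_cons (a : ℕ+) (l : List ℕ+) (hl : l ≠ []) :
    nbrack (a :: l) = Xw [a] * nbrack l - nbrack l * Xw [a] := by
  cases l with
  | nil => exact absurd rfl hl
  | cons b m => rfl

theorem nbrack_ofFn : ∀ (n : ℕ) (f : Fin (n + 1) → ℕ+), nbrack (List.ofFn f) = Gsum n f := by
  intro n
  induction n with
  | zero =>
    intro f
    haveI : Subsingleton (Fin (0 + 1)) := ⟨fun a b => Fin.ext (by omega)⟩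
    haveI : Subsingleton (Equiv.Perm (Fin (0 + 1))) :=
      ⟨fun a b => Equiv.ext fun x => Subsingleton.elim _ _⟩
    have huni : ∀ σ : Equiv.Perm (Fin 1), Uni σ := fun σ =>
      ⟨fun a b hab _ => absurd (Subsingleton.elim a b) hab.ne,
       fun a b _ hab => absurd (Subsingleton.elim a b) hab.ne⟩
    have h1 : List.ofFn f = [f 0] := by simp [List.ofFn_succ]
    rw [h1, Gsum, Finset.filter_true_of_mem (fun σ _ => huni σ),
      Fintype.sum_subsingleton _ 1]
    simp [nbrack, Equiv.Perm.one_apply, h1]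
  | succ n ih =>
    intro f
    have hofn : List.ofFn f = f 0 :: List.ofFn (fun j : Fin (n + 1) => f j.succ) :=
      List.ofFn_succ
    have hlne : List.ofFn (fun j : Fin (n + 1) => f j.succ) ≠ [] := by simp
    rw [hofn, nbrack_cons _ _ hlne, ih (fun j => f j.succ)]
    have hsplit : (Finset.univ.filter (fun σ : Equiv.Perm (Fin (n + 2)) => Uni σ))
        = (Finset.univ.filter (fun σ : Equiv.Perm (Fin (n + 2)) => Uni σ ∧ σ 0 = 0))
          ∪ (Finset.univ.filter (fun σ : Equiv.Perm (Fin (n + 2)) =>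
              Uni σ ∧ σ (Fin.last (n + 1)) = 0)) := by
      ext σ
      simp only [Finset.mem_filter, Finset.mem_union, Finset.mem_univ, true_and]
      constructor
      · intro h
        rcases h.zero_or_last with h0 | hl
        · exact Or.inl ⟨h, h0⟩
        · exact Or.inr ⟨h, hl⟩
      · rintro (⟨h, _⟩ | ⟨h, _⟩) <;> exact h
    have hdisj : Disjoint
        (Finset.univ.filter (fun σ : Equiv.Perm (Fin (n + 2)) => Uni σ ∧ σ 0 = 0))
        (Finset.univ.filter (fun σ : Equiv.Perm (Fin (n + 2)) =>
          Uni σ ∧ σ (Fin.last (n + 1)) = 0)) := by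
      rw [Finset.disjoint_left]
      intro σ hA hB
      simp only [Finset.mem_filter, Finset.mem_univ, true_and] at hA hB
      have h0l : (0 : Fin (n + 2)) = Fin.last (n + 1) :=
        σ.injective (hA.2.trans hB.2.symm)
      have := congrArg Fin.val h0l
      simp [Fin.last] at this
    conv_rhs => rw [Gsum, hsplit, Finset.sum_union hdisj]
    have hA : ∑ σ ∈ Finset.univ.filter
          (fun σ : Equiv.Perm (Fin (n + 2)) => Uni σ ∧ σ 0 = 0),
        ((-1 : ℚ)) ^ (n + 1 - (peakP σ : ℕ)) • Xw (List.ofFn fun j => f (σ j))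
        = Xw [f 0] * Gsum n (fun j => f j.succ) := by
      rw [Gsum, Finset.mul_sum]
      refine (Finset.sum_bij (fun τ _ => frP τ) ?_ ?_ ?_ ?_).symm
      · intro τ hτ
        simp only [Finset.mem_filter, Finset.mem_univ, true_and] at hτ ⊢
        exact ⟨(uni_frP τ).mpr hτ, frP_zero τ⟩
      · intro τ₁ _ τ₂ _ h
        have := Equiv.Perm.decomposeFin.symm.injective h
        exact (Prod.mk.injEq _ _ _ _).mp this |>.2
      · intro σ hσ
        simp only [Finset.mem_filter, Finset.mem_univ, true_and] at hσ
        have h1 : (Equiv.Perm.decomposeFin σ).1 = 0 := by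
          have := Equiv.Perm.decomposeFin_symm_apply_zero
            (Equiv.Perm.decomposeFin σ).1 (Equiv.Perm.decomposeFin σ).2
          rw [Prod.mk.eta, Equiv.symm_apply_apply] at this
          rw [← this, hσ.2]
        have hfr : frP (Equiv.Perm.decomposeFin σ).2 = σ := by
          show Equiv.Perm.decomposeFin.symm (0, (Equiv.Perm.decomposeFin σ).2) = σ
          rw [← h1, Prod.mk.eta, Equiv.symm_apply_apply]
        refine ⟨(Equiv.Perm.decomposeFin σ).2, ?_, hfr⟩
        simp only [Finset.mem_filter, Finset.mem_univ, true_and]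
        exact (uni_frP _).mp (hfr ▸ hσ.1)
      · intro τ _
        have hpk : (peakP (frP τ) : ℕ) = (peakP τ : ℕ) + 1 := by
          rw [peakP_frP, Fin.val_succ]
        have hw : List.ofFn (fun j : Fin (n + 2) => f (frP τ j))
            = f 0 :: List.ofFn (fun j : Fin (n + 1) => f (τ j).succ) := by
          rw [List.ofFn_succ, frP_zero]
          congr 1
        have hexp : n + 1 - ((peakP τ : ℕ) + 1) = n - (peakP τ : ℕ) := by omega
        rw [hpk, hexp, hw, Xw_cons (f 0) (List.ofFn fun j : Fin (n + 1) => f (τ j).succ),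
          mul_smul_comm]
    have hB : ∑ σ ∈ Finset.univ.filter
          (fun σ : Equiv.Perm (Fin (n + 2)) => Uni σ ∧ σ (Fin.last (n + 1)) = 0),
        ((-1 : ℚ)) ^ (n + 1 - (peakP σ : ℕ)) • Xw (List.ofFn fun j => f (σ j))
        = -(Gsum n (fun j => f j.succ) * Xw [f 0]) := by
      rw [Gsum, Finset.sum_mul, ← Finset.sum_neg_distrib]
      refine (Finset.sum_bij (fun τ _ => bkP τ) ?_ ?_ ?_ ?_).symm
      · intro τ hτ
        simp only [Finset.mem_filter, Finset.mem_univ, true_and] at hτ ⊢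
        exact ⟨(uni_bkP τ).mpr hτ, bkP_last τ⟩
      · intro τ₁ _ τ₂ _ h
        have h' : bkP τ₁ = bkP τ₂ := h
        refine Equiv.ext fun j => ?_
        have h2 := DFunLike.congr_fun h' j.castSucc
        rw [bkP_castSucc, bkP_castSucc] at h2
        exact Fin.succ_injective _ h2
      · intro σ hσ
        simp only [Finset.mem_filter, Finset.mem_univ, true_and] at hσ
        set σ' : Equiv.Perm (Fin (n + 2)) := Fin.revPerm.trans σ with hσ'def
        have hσ'0 : σ' 0 = 0 := by
          simp only [hσ'def, Equiv.trans_apply, Fin.revPerm_apply, Fin.rev_zero]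
          exact hσ.2
        have h1 : (Equiv.Perm.decomposeFin σ').1 = 0 := by
          have := Equiv.Perm.decomposeFin_symm_apply_zero
            (Equiv.Perm.decomposeFin σ').1 (Equiv.Perm.decomposeFin σ').2
          rw [Prod.mk.eta, Equiv.symm_apply_apply] at this
          rw [← this, hσ'0]
        have hfr : frP (Equiv.Perm.decomposeFin σ').2 = σ' := by
          show Equiv.Perm.decomposeFin.symm (0, (Equiv.Perm.decomposeFin σ').2) = σ'
          rw [← h1, Prod.mk.eta, Equiv.symm_apply_apply]
        have hrr : Fin.revPerm.trans (Fin.revPerm.trans (Equiv.Perm.decomposeFin σ').2)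
            = (Equiv.Perm.decomposeFin σ').2 := by
          refine Equiv.ext fun x => ?_
          simp [Equiv.trans_apply, Fin.revPerm_apply, Fin.rev_rev]
        have hbk : bkP (Fin.revPerm.trans (Equiv.Perm.decomposeFin σ').2) = σ := by
          show Fin.revPerm.trans (frP (Fin.revPerm.trans
            (Fin.revPerm.trans (Equiv.Perm.decomposeFin σ').2))) = σ
          rw [hrr, hfr]
          refine Equiv.ext fun x => ?_
          simp [hσ'def, Equiv.trans_apply, Fin.revPerm_apply, Fin.rev_rev]
        refine ⟨Fin.revPerm.trans (Equiv.Perm.decomposeFin σ').2, ?_, hbk⟩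
        simp only [Finset.mem_filter, Finset.mem_univ, true_and]
        exact (uni_bkP _).mp (hbk ▸ hσ.1)
      · intro τ _
        have hpk : (peakP (bkP τ) : ℕ) = (peakP τ : ℕ) := by
          rw [peakP_bkP, Fin.coe_castSucc]
        have hw : List.ofFn (fun j : Fin (n + 2) => f (bkP τ j))
            = (List.ofFn (fun j : Fin (n + 1) => f (τ j).succ)) ++ [f 0] := by
          rw [List.ofFn_succ', List.concat_eq_append, bkP_last]
          congr 1
          simp only [bkP_castSucc]
        have hexp : n + 1 - (peakP τ : ℕ) = (n - (peakP τ : ℕ)) + 1 := by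
          have := (peakP τ).isLt
          omega
        rw [hpk, hw, Xw_concat, hexp, pow_succ, smul_mul_assoc, mul_neg_one, neg_smul]
    rw [hA, hB, ← sub_eq_add_neg]

theorem collapse_sum (n : ℕ) (f : Fin (n + 1) → ℕ+) :
    ∑ i : Fin (n + 1), ((-1 : ℚ)) ^ (n - (i : ℕ)) •
      ∑ σ ∈ Finset.univ.filter (fun σ : Equiv.Perm (Fin (n + 1)) => Pcond σ i),
        Xw (List.ofFn fun j => f (σ j)) = Gsum n f := by
  have step1 : ∀ i : Fin (n + 1), ((-1 : ℚ)) ^ (n - (i : ℕ)) •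
      ∑ σ ∈ Finset.univ.filter (fun σ : Equiv.Perm (Fin (n + 1)) => Pcond σ i),
        Xw (List.ofFn fun j => f (σ j))
      = ∑ σ : Equiv.Perm (Fin (n + 1)),
          if Pcond σ i then ((-1 : ℚ)) ^ (n - (i : ℕ)) • Xw (List.ofFn fun j => f (σ j))
          else 0 := by
    intro i
    rw [Finset.smul_sum, Finset.sum_filter]
  rw [Finset.sum_congr rfl (fun i _ => step1 i), Finset.sum_comm, Gsum, Finset.sum_filter]
  refine Finset.sum_congr rfl (fun σ _ => ?_)
  refine (Finset.sum_eq_single (peakP σ) ?_ ?_).trans ?_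
  · intro i _ hne
    exact if_neg (fun hP => hne hP.eq_peak)
  · intro h
    exact absurd (Finset.mem_univ _) h
  · rfl

end NbrackExpansionAux

open scoped Classical in
/-- the right-nested Lie bracket expands as
`[X_{k₁},[X_{k₂},[…,[X_{k_{r-1}},X_{k_r}]…]]] = Σ_{i=1}^{r} (-1)^{r-i} Σ_σ X_{k_{σ(1)}}⋯X_{k_{σ(r)}}`,
the inner sum over bijections `σ` of `{1,…,r}` with
`σ(1) < ⋯ < σ(i-1) < σ(i) > σ(i+1) > ⋯ > σ(r)`. -/
theorem nbrack_expansion (ks : List ℕ+) (hne : ks ≠ []) :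
    nbrack ks =
      ∑ i : Fin ks.length, ((-1 : ℚ)) ^ (ks.length - 1 - (i : ℕ)) •
        ∑ σ ∈ Finset.univ.filter (fun σ : Equiv.Perm (Fin ks.length) =>
            (∀ a b : Fin ks.length, a < b → b ≤ i → σ a < σ b) ∧
            (∀ a b : Fin ks.length, i ≤ a → a < b → σ b < σ a)),
          Xw (List.ofFn fun j => ks.get (σ j)) := by
  cases ks with
  | nil => exact absurd rfl hne
  | cons k t =>
    have h1 : nbrack (k :: t) = Gsum t.length ((k :: t).get) := by
      conv_lhs => rw [← List.ofFn_get (k :: t)]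
      exact nbrack_ofFn t.length ((k :: t).get)
    rw [h1, ← collapse_sum t.length ((k :: t).get)]
    refine Finset.sum_congr rfl (fun i _ => ?_)
    congr 1
    refine Finset.sum_congr ?_ (fun _ _ => rfl)
    ext σ
    simp only [Finset.mem_filter, Finset.mem_univ, true_and]
    exact Iff.rfl
end
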